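/- Let q_0 be a probability density on ℝ^n and for each x_0 ∈ ℝ^n let q_t(·|x_0) be a probability density on ℝ^n that is everywhere strictly positive and differentiable in its first argument, with marginal density q_t(x) = ∫ q_0(x_0) q_t(x|x_0) dx_0 also strictly positive and differentiable, and suppose differentiation under the integral sign is valid, i.e. ∇_x q_t(x) = ∫ q_0(x_0) ∇_x q_t(x|x_0) dx_0 for every x. Then there exists a constant C ∈ ℝ, depending only on q_0 and the kernels q_t(·|x_0) and not on s, such that for every measurable s : ℝ^n → ℝ^n for which all the expectations below are finite, J_1(s) = J_2(s) + C, where J_1(s) = (1/2) E_{x ~ q_t}[ ‖s(x) − ∇_x log q_t(x)‖² ] and J_2(s) = (1/2) E_{(x_0, x) ~ q_0(x_0) q_t(x|x_0)}[ ‖s(x) − ∇_x log q_t(x|x_0)‖² ]. -/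

import Mathlib

open MeasureTheory Real Filter
open scoped RealInnerProductSpace Topology

/-!
Expanding the squares, `J₁(s)` and `J₂(s)` each split into `E‖s‖²`, a cross term `-2 E⟪s, score⟫`
and an `s`-independent second moment of the score. The terms `E‖s‖²` agree by Fubini, since `q_t`
is the marginal of `q₀(x₀) q_t(x|x₀)`. The cross terms agree because
`q_t ∇ log q_t = ∇ q_t = ∫ q₀(x₀) q_t(·|x₀) ∇ log q_t(·|x₀) dx₀`, so after Fubini the inner product
with `s(x)` can be taken inside the `x₀`-integral. The constant is the difference of the two
second moments.
-/

theorem gradient_log_apply {E : Type*} [NormedAddCommGroup E] [InnerProductSpace ℝ E]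
    [CompleteSpace E] {f : E → ℝ} {x : E} (hf : DifferentiableAt ℝ f x) (hx : f x ≠ 0) :
    gradient (fun y => log (f y)) x = (f x)⁻¹ • gradient f x := by
  have hlog : HasFDerivAt (fun y => log (f y)) ((f x)⁻¹ • fderiv ℝ f x) x :=
    (hasDerivAt_log hx).comp_hasFDerivAt x hf.hasFDerivAt
  rw [gradient, gradient, hlog.fderiv, map_smul]

theorem measurable_fderiv_apply_of_measurable_uncurry {α E F : Type*} [MeasurableSpace α]
    [NormedAddCommGroup E] [NormedSpace ℝ E] [MeasurableSpace E] [MeasurableAdd E]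
    [NormedAddCommGroup F] [NormedSpace ℝ F] [MeasurableSpace F] [BorelSpace F]
    [SecondCountableTopology F]
    {f : α → E → F} (hf : Measurable f.uncurry) (hdiff : ∀ a, Differentiable ℝ (f a)) (v : E) :
    Measurable fun p : α × E => fderiv ℝ (f p.1) p.2 v := by
  have hslope : ∀ p : α × E, Tendsto (slope (fun t : ℝ => f p.1 (p.2 + t • v)) 0) (𝓝[≠] 0)
      (𝓝 (fderiv ℝ (f p.1) p.2 v)) := by
    intro p
    rw [← hasDerivAt_iff_tendsto_slope]
    have hline : HasDerivAt (fun t : ℝ => p.2 + t • v) v 0 := by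
      simpa using ((hasDerivAt_id (0 : ℝ)).smul_const v).const_add p.2
    exact (hdiff p.1 _).hasFDerivAt.comp_hasDerivAt_of_eq 0 hline (by simp)
  have hseq : Tendsto (fun k : ℕ => ((k : ℝ) + 1)⁻¹) atTop (𝓝[≠] 0) :=
    tendsto_nhdsWithin_iff.2 ⟨by simpa using tendsto_one_div_add_atTop_nhds_zero_nat (𝕜 := ℝ),
      Eventually.of_forall fun k => by simpa using (Nat.cast_add_one_pos k).ne'⟩
  refine measurable_of_tendsto_metrizable
    (f := fun k (p : α × E) => slope (fun t : ℝ => f p.1 (p.2 + t • v)) 0 ((k : ℝ) + 1)⁻¹)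
    (fun k => ?_) (tendsto_pi_nhds.2 fun p => (hslope p).comp hseq)
  simp only [slope_def_module, zero_smul, add_zero]
  exact ((hf.comp (measurable_fst.prodMk (measurable_snd.add_const _))).sub hf).const_smul _

theorem measurable_gradient_of_measurable_uncurry {α E : Type*} [MeasurableSpace α]
    [NormedAddCommGroup E] [InnerProductSpace ℝ E] [FiniteDimensional ℝ E] [MeasurableSpace E]
    [BorelSpace E] {f : α → E → ℝ} (hf : Measurable f.uncurry)
    (hdiff : ∀ a, Differentiable ℝ (f a)) :
    Measurable fun p : α × E => gradient (f p.1) p.2 := by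
  let b := stdOrthonormalBasis ℝ E
  have hexpand : ∀ (g : E → ℝ) (x : E), gradient g x = ∑ i, fderiv ℝ g x (b i) • b i := by
    intro g x
    conv_lhs => rw [← b.sum_repr' (gradient g x)]
    refine Finset.sum_congr rfl fun i _ => ?_
    rw [real_inner_comm, inner_gradient_left]
  simp only [hexpand]
  exact Finset.measurable_sum _ fun i _ =>
    (measurable_fderiv_apply_of_measurable_uncurry hf hdiff (b i)).smul_const _

section WeightedSquares

variable {α E : Type*} [MeasurableSpace α] {μ : Measure α} [NormedAddCommGroup E]
  {w : α → ℝ} {a b : α → E}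

theorem integrable_mul_norm_sq_of_sub (hw : ∀ᵐ x ∂μ, 0 ≤ w x)
    (ha : AEStronglyMeasurable (fun x => w x * ‖a x‖ ^ 2) μ)
    (hb : Integrable (fun x => w x * ‖b x‖ ^ 2) μ)
    (hab : Integrable (fun x => w x * ‖a x - b x‖ ^ 2) μ) :
    Integrable (fun x => w x * ‖a x‖ ^ 2) μ := by
  refine ((hab.const_mul 2).add (hb.const_mul 2)).mono' ha ?_
  filter_upwards [hw] with x hwx
  have hsq : ‖a x‖ ^ 2 ≤ 2 * ‖a x - b x‖ ^ 2 + 2 * ‖b x‖ ^ 2 := by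
    nlinarith [norm_le_norm_sub_add (a x) (b x), norm_nonneg (a x),
      sq_nonneg (‖a x - b x‖ - ‖b x‖)]
  rw [Real.norm_eq_abs, abs_of_nonneg (by positivity), Pi.add_apply]
  nlinarith [mul_le_mul_of_nonneg_left hsq hwx]

theorem integrable_smul_of_mul_norm_sq [NormedSpace ℝ E] {u : α → E} (hw : ∀ᵐ x ∂μ, 0 ≤ w x)
    (hu : AEStronglyMeasurable u μ) (hwi : Integrable w μ)
    (hwu : Integrable (fun x => w x * ‖u x‖ ^ 2) μ) :
    Integrable (fun x => w x • u x) μ := by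
  refine ((hwi.const_mul (1 / 2)).add (hwu.const_mul (1 / 2))).mono'
    (hwi.aestronglyMeasurable.smul hu) ?_
  filter_upwards [hw] with x hwx
  rw [norm_smul, Real.norm_eq_abs, abs_of_nonneg hwx, Pi.add_apply]
  -- `w ‖u‖ ≤ (w + w ‖u‖²) / 2`
  nlinarith [mul_nonneg hwx (sq_nonneg (‖u x‖ - 1))]

variable [InnerProductSpace ℝ E]

theorem integrable_mul_inner_of_norm_sq (ha : Integrable (fun x => w x * ‖a x‖ ^ 2) μ)
    (hb : Integrable (fun x => w x * ‖b x‖ ^ 2) μ)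
    (hab : Integrable (fun x => w x * ‖a x - b x‖ ^ 2) μ) :
    Integrable (fun x => w x * ⟪a x, b x⟫) μ := by
  have hpolar : (fun x => w x * ⟪a x, b x⟫) =
      fun x => (1 / 2 : ℝ) * (w x * ‖a x‖ ^ 2 + w x * ‖b x‖ ^ 2 - w x * ‖a x - b x‖ ^ 2) := by
    funext x
    rw [norm_sub_sq_real]
    ring
  rw [hpolar]
  exact ((ha.add hb).sub hab).const_mul _

theorem integral_mul_norm_sub_sq (ha : Integrable (fun x => w x * ‖a x‖ ^ 2) μ)
    (hb : Integrable (fun x => w x * ‖b x‖ ^ 2) μ)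
    (hab : Integrable (fun x => w x * ‖a x - b x‖ ^ 2) μ) :
    ∫ x, w x * ‖a x - b x‖ ^ 2 ∂μ = ∫ x, w x * ‖a x‖ ^ 2 ∂μ - 2 * ∫ x, w x * ⟪a x, b x⟫ ∂μ
      + ∫ x, w x * ‖b x‖ ^ 2 ∂μ := by
  have hinner := (integrable_mul_inner_of_norm_sq ha hb hab).const_mul 2
  have hexpand : (fun x => w x * ‖a x - b x‖ ^ 2) =
      fun x => w x * ‖a x‖ ^ 2 - 2 * (w x * ⟪a x, b x⟫) + w x * ‖b x‖ ^ 2 := by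
    funext x
    rw [norm_sub_sq_real]
    ring
  have hdiff : Integrable (fun x => w x * ‖a x‖ ^ 2 - 2 * (w x * ⟪a x, b x⟫)) μ := ha.sub hinner
  rw [hexpand, integral_add hdiff hb, integral_sub ha hinner, integral_const_mul]

end WeightedSquares

section Marginal

variable {X E : Type*} [MeasurableSpace X] [MeasurableSpace E] {μ : Measure X} {ν : Measure E}
  [SFinite μ] [SFinite ν] {q0 : X → ℝ} {qc : X → E → ℝ} {qt : E → ℝ}

theorem integral_prod_mul_eq_integral_marginal (hqt : ∀ x, qt x = ∫ x0, q0 x0 * qc x0 x ∂μ)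
    {g : E → ℝ} (hg : Integrable (fun p : X × E => q0 p.1 * qc p.1 p.2 * g p.2) (μ.prod ν)) :
    ∫ p, q0 p.1 * qc p.1 p.2 * g p.2 ∂(μ.prod ν) = ∫ x, qt x * g x ∂ν := by
  rw [integral_prod_symm _ hg]
  refine integral_congr_ae (Eventually.of_forall fun x => ?_)
  simp only [integral_mul_const, hqt]

theorem integral_prod_inner_eq_integral_inner_integral {F : Type*} [NormedAddCommGroup F]
    [InnerProductSpace ℝ F] [CompleteSpace F] {s : E → F} {v : X → E → F}
    (hint : Integrable (fun p : X × E => ⟪s p.2, v p.1 p.2⟫) (μ.prod ν))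
    (hv : ∀ᵐ x ∂ν, Integrable (fun x0 => v x0 x) μ) :
    ∫ p, ⟪s p.2, v p.1 p.2⟫ ∂(μ.prod ν) = ∫ x, ⟪s x, ∫ x0, v x0 x ∂μ⟫ ∂ν := by
  rw [integral_prod_symm _ hint]
  refine integral_congr_ae ?_
  filter_upwards [hv] with x hx
  exact integral_inner hx _

end Marginal

section Score

variable {X E : Type*} [MeasurableSpace X] [NormedAddCommGroup E] [InnerProductSpace ℝ E]
  [FiniteDimensional ℝ E] [MeasurableSpace E] [BorelSpace E] {μ : Measure X} {ν : Measure E}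
  [SFinite μ] [SFinite ν] {q0 : X → ℝ} {qc : X → E → ℝ} {qt : E → ℝ}

theorem ae_integrable_smul_gradient_log (hq0 : ∀ x0, 0 ≤ q0 x0) (hqc_pos : ∀ x0 x, 0 < qc x0 x)
    (hqc_diff : ∀ x0, Differentiable ℝ (qc x0)) (hqc_meas : Measurable (Function.uncurry qc))
    (hqc_int : ∀ x, Integrable (fun x0 => q0 x0 * qc x0 x) μ)
    (hscore : Integrable (fun p : X × E =>
      q0 p.1 * qc p.1 p.2 * ‖gradient (fun y => log (qc p.1 y)) p.2‖ ^ 2) (μ.prod ν)) :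
    ∀ᵐ x ∂ν, Integrable (fun x0 => (q0 x0 * qc x0 x) • gradient (fun y => log (qc x0 y)) x) μ := by
  have hmeas : Measurable fun p : X × E => gradient (fun y => log (qc p.1 y)) p.2 :=
    measurable_gradient_of_measurable_uncurry (f := fun x0 y => log (qc x0 y)) hqc_meas.log
      fun x0 => (hqc_diff x0).log fun x => (hqc_pos x0 x).ne'
  filter_upwards [hscore.prod_left_ae] with x hx
  exact integrable_smul_of_mul_norm_sq
    (Eventually.of_forall fun x0 => mul_nonneg (hq0 x0) (hqc_pos x0 x).le)
    (hmeas.comp measurable_prodMk_right).aestronglyMeasurable (hqc_int x) hx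

theorem integral_prod_mul_inner_gradient_log_eq (hq0 : ∀ x0, 0 ≤ q0 x0)
    (hqc_pos : ∀ x0 x, 0 < qc x0 x) (hqc_diff : ∀ x0, Differentiable ℝ (qc x0))
    (hqc_meas : Measurable (Function.uncurry qc))
    (hqc_int : ∀ x, Integrable (fun x0 => q0 x0 * qc x0 x) μ)
    (hqt_pos : ∀ x, 0 < qt x) (hqt_diff : Differentiable ℝ qt)
    (hswap : ∀ x, gradient qt x = ∫ x0, q0 x0 • gradient (qc x0) x ∂μ)
    (hscore : Integrable (fun p : X × E =>
      q0 p.1 * qc p.1 p.2 * ‖gradient (fun y => log (qc p.1 y)) p.2‖ ^ 2) (μ.prod ν))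
    {s : E → E} (hint : Integrable (fun p : X × E =>
      q0 p.1 * qc p.1 p.2 * ⟪s p.2, gradient (fun y => log (qc p.1 y)) p.2⟫) (μ.prod ν)) :
    ∫ p, q0 p.1 * qc p.1 p.2 * ⟪s p.2, gradient (fun y => log (qc p.1 y)) p.2⟫ ∂(μ.prod ν)
      = ∫ x, qt x * ⟪s x, gradient (fun y => log (qt y)) x⟫ ∂ν := by
  have hcond : ∀ x0 x, (q0 x0 * qc x0 x) • gradient (fun y => log (qc x0 y)) x
      = q0 x0 • gradient (qc x0) x := fun x0 x => by
    rw [gradient_log_apply (hqc_diff x0 x) (hqc_pos x0 x).ne', smul_smul, mul_assoc,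
      mul_inv_cancel₀ (hqc_pos x0 x).ne', mul_one]
  have hmarg : ∀ x, qt x * ⟪s x, gradient (fun y => log (qt y)) x⟫
      = ⟪s x, ∫ x0, (q0 x0 * qc x0 x) • gradient (fun y => log (qc x0 y)) x ∂μ⟫ := fun x => by
    rw [gradient_log_apply (hqt_diff x) (hqt_pos x).ne', real_inner_smul_right,
      mul_inv_cancel_left₀ (hqt_pos x).ne']
    simp only [hcond, ← hswap]
  simp only [hmarg, ← real_inner_smul_right] at hint ⊢
  exact integral_prod_inner_eq_integral_inner_integral hint
    (ae_integrable_smul_gradient_log hq0 hqc_pos hqc_diff hqc_meas hqc_int hscore)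

end Score

theorem score_matching_equivalence_general {n : ℕ}
    (q0 : EuclideanSpace ℝ (Fin n) → ℝ)
    (qc : EuclideanSpace ℝ (Fin n) → EuclideanSpace ℝ (Fin n) → ℝ)
    (qt : EuclideanSpace ℝ (Fin n) → ℝ)
    -- q0 is a probability density
    (hq0_nonneg : ∀ x0, 0 ≤ q0 x0)
    (hq0_meas : Measurable q0)
    -- the conditional densities are fully supported, differentiable probability densities
    (hqc_pos : ∀ x0 x, 0 < qc x0 x)
    (hqc_diff : ∀ x0, Differentiable ℝ (qc x0))
    (hqc_meas : Measurable (Function.uncurry qc))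
    -- qt is the marginal density, strictly positive and differentiable
    (hqt_def : ∀ x, qt x = ∫ x0, q0 x0 * qc x0 x)
    (hqt_pos : ∀ x, 0 < qt x)
    (hqt_diff : Differentiable ℝ qt)
    -- differentiation under the integral sign is valid
    (hswap : ∀ x, gradient qt x = ∫ x0, q0 x0 • gradient (fun y => qc x0 y) x)
    -- the (s-independent) second moments of the scores are finite
    (hscore_t : Integrable (fun x => qt x * ‖gradient (fun y => Real.log (qt y)) x‖ ^ 2))
    (hscore_c : Integrable (fun p : EuclideanSpace ℝ (Fin n) × EuclideanSpace ℝ (Fin n) =>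
      q0 p.1 * qc p.1 p.2 * ‖gradient (fun y => Real.log (qc p.1 y)) p.2‖ ^ 2)) :
    ∃ C : ℝ, ∀ s : EuclideanSpace ℝ (Fin n) → EuclideanSpace ℝ (Fin n),
      Measurable s →
      -- all the expectations below are finite
      Integrable (fun x => qt x * ‖s x‖ ^ 2) →
      Integrable (fun x => qt x * ‖s x - gradient (fun y => Real.log (qt y)) x‖ ^ 2) →
      Integrable (fun p : EuclideanSpace ℝ (Fin n) × EuclideanSpace ℝ (Fin n) =>
        q0 p.1 * qc p.1 p.2 * ‖s p.2 - gradient (fun y => Real.log (qc p.1 y)) p.2‖ ^ 2) →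
      -- J₁(s) = J₂(s) + C
      (1 / 2) * ∫ x, qt x * ‖s x - gradient (fun y => Real.log (qt y)) x‖ ^ 2
        = (1 / 2) * (∫ p : EuclideanSpace ℝ (Fin n) × EuclideanSpace ℝ (Fin n),
            q0 p.1 * qc p.1 p.2 * ‖s p.2 - gradient (fun y => Real.log (qc p.1 y)) p.2‖ ^ 2)
          + C := by
  have hqc_int : ∀ x, Integrable (fun x0 => q0 x0 * qc x0 x) :=
    fun x => .of_integral_ne_zero (hqt_def x ▸ (hqt_pos x).ne')
  refine ⟨(1 / 2) * (∫ x, qt x * ‖gradient (fun y => log (qt y)) x‖ ^ 2)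
    - (1 / 2) * ∫ p : EuclideanSpace ℝ (Fin n) × EuclideanSpace ℝ (Fin n),
        q0 p.1 * qc p.1 p.2 * ‖gradient (fun y => log (qc p.1 y)) p.2‖ ^ 2,
    fun s hs hs_t hJ₁ hJ₂ => ?_⟩
  rw [Measure.volume_eq_prod] at hscore_c hJ₂ ⊢
  have hs_c : Integrable (fun p : EuclideanSpace ℝ (Fin n) × EuclideanSpace ℝ (Fin n) =>
      q0 p.1 * qc p.1 p.2 * ‖s p.2‖ ^ 2) (volume.prod volume) :=
    integrable_mul_norm_sq_of_sub
      (Eventually.of_forall fun p => mul_nonneg (hq0_nonneg p.1) (hqc_pos p.1 p.2).le)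
      (((hq0_meas.comp measurable_fst).mul hqc_meas).mul
        ((hs.comp measurable_snd).norm.pow_const 2)).aestronglyMeasurable hscore_c hJ₂
  rw [integral_mul_norm_sub_sq hs_t hscore_t hJ₁, integral_mul_norm_sub_sq hs_c hscore_c hJ₂,
    integral_prod_mul_eq_integral_marginal (g := fun x => ‖s x‖ ^ 2) hqt_def hs_c,
    integral_prod_mul_inner_gradient_log_eq hq0_nonneg hqc_pos hqc_diff hqc_meas hqc_int hqt_pos
      hqt_diff hswap hscore_c (integrable_mul_inner_of_norm_sq hs_c hscore_c hJ₂)]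
  ring

/-- **Score matching equivalence (Theorem 1 of the paper).**
If the conditional densities `qc x0 = q_t(·|x0)` are everywhere positive and differentiable,
the marginal `qt x = ∫ q0 x0 * qc x0 x dx0` is positive and differentiable, differentiation
under the integral sign is valid, and the (s-independent) score second moments are finite,
then there is a constant `C` not depending on `s` such that for every measurable `s` with
all relevant expectations finite, `J₁(s) = J₂(s) + C`. -/
theorem score_matching_equivalence {n : ℕ}
    (q0 : EuclideanSpace ℝ (Fin n) → ℝ)
    (qc : EuclideanSpace ℝ (Fin n) → EuclideanSpace ℝ (Fin n) → ℝ)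
    (qt : EuclideanSpace ℝ (Fin n) → ℝ)
    -- q0 is a probability density
    (hq0_nonneg : ∀ x0, 0 ≤ q0 x0)
    (hq0_meas : Measurable q0)
    (hq0_prob : ∫ x0, q0 x0 = 1)
    -- the conditional densities are fully supported, differentiable probability densities
    (hqc_pos : ∀ x0 x, 0 < qc x0 x)
    (hqc_diff : ∀ x0, Differentiable ℝ (qc x0))
    (hqc_meas : Measurable (Function.uncurry qc))
    (hqc_prob : ∀ x0, ∫ x, qc x0 x = 1)
    -- qt is the marginal density, strictly positive and differentiable
    (hqt_def : ∀ x, qt x = ∫ x0, q0 x0 * qc x0 x)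
    (hqt_pos : ∀ x, 0 < qt x)
    (hqt_diff : Differentiable ℝ qt)
    -- differentiation under the integral sign is valid
    (hswap : ∀ x, gradient qt x = ∫ x0, q0 x0 • gradient (fun y => qc x0 y) x)
    -- the (s-independent) second moments of the scores are finite
    (hscore_t : Integrable (fun x => qt x * ‖gradient (fun y => Real.log (qt y)) x‖ ^ 2))
    (hscore_c : Integrable (fun p : EuclideanSpace ℝ (Fin n) × EuclideanSpace ℝ (Fin n) =>
      q0 p.1 * qc p.1 p.2 * ‖gradient (fun y => Real.log (qc p.1 y)) p.2‖ ^ 2)) :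
    ∃ C : ℝ, ∀ s : EuclideanSpace ℝ (Fin n) → EuclideanSpace ℝ (Fin n),
      Measurable s →
      -- all the expectations below are finite
      Integrable (fun x => qt x * ‖s x‖ ^ 2) →
      Integrable (fun x => qt x * ‖s x - gradient (fun y => Real.log (qt y)) x‖ ^ 2) →
      Integrable (fun p : EuclideanSpace ℝ (Fin n) × EuclideanSpace ℝ (Fin n) =>
        q0 p.1 * qc p.1 p.2 * ‖s p.2 - gradient (fun y => Real.log (qc p.1 y)) p.2‖ ^ 2) →
      -- J₁(s) = J₂(s) + C
      (1 / 2) * ∫ x, qt x * ‖s x - gradient (fun y => Real.log (qt y)) x‖ ^ 2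
        = (1 / 2) * (∫ p : EuclideanSpace ℝ (Fin n) × EuclideanSpace ℝ (Fin n),
            q0 p.1 * qc p.1 p.2 * ‖s p.2 - gradient (fun y => Real.log (qc p.1 y)) p.2‖ ^ 2)
          + C :=
  score_matching_equivalence_general q0 qc qt hq0_nonneg hq0_meas hqc_pos hqc_diff hqc_meas hqt_def
    hqt_pos hqt_diff hswap hscore_t hscore_c
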